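/- Let (x₁, y₁), …, (xₙ, yₙ) be a sequence of examples in ℝ^d × {−1,+1} with ‖x_t‖ ≤ R for all t. Let u be any unit vector and γ > 0, and define the one-norm of the hinge losses D₁ = Σ_{t=1}^n [γ − y_t⟨u, x_t⟩]₊. Run the perceptron algorithm: w₁ = 0 and w_{t+1} = w_t + y_t x_t · m_t where m_t = 𝟙[sign(⟨w_t, x_t⟩) ≠ y_t]. Then the total number of mistakes M = Σ_{t=1}^n m_t satisfies M ≤ ( (R + √(γ D₁)) / γ )². -/
import Mathlib


open Finset Real
open scoped RealInnerProductSpace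

/-- The mistake indicator of the perceptron at round `t`:
`m_t = 𝟙[sign(⟨w_t, x_t⟩) ≠ y_t]`. -/
noncomputable def mistake {d : ℕ} (w : ℕ → EuclideanSpace ℝ (Fin d))
    (x : ℕ → EuclideanSpace ℝ (Fin d)) (y : ℕ → ℝ) (t : ℕ) : ℝ :=
  if Real.sign ⟪w t, x t⟫ = y t then 0 else 1

theorem stmt_11 {d n : ℕ} (R γ : ℝ) (hγ : 0 < γ)
    (x : ℕ → EuclideanSpace ℝ (Fin d)) (y : ℕ → ℝ)
    (hy : ∀ t, y t = 1 ∨ y t = -1)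
    (hR : ∀ t, 1 ≤ t → t ≤ n → ‖x t‖ ≤ R)
    (u : EuclideanSpace ℝ (Fin d)) (hu : ‖u‖ = 1)
    (w : ℕ → EuclideanSpace ℝ (Fin d)) (hw1 : w 1 = 0)
    (hupd : ∀ t, 1 ≤ t → t ≤ n →
      w (t + 1) = w t + mistake w x y t • ((y t) • (x t)))
    (D₁ : ℝ) (hD₁ : D₁ = ∑ t ∈ Icc 1 n, max (γ - y t * ⟪u, x t⟫) 0) :
    ∑ t ∈ Icc 1 n, mistake w x y t ≤ ((R + Real.sqrt (γ * D₁)) / γ) ^ 2 := by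
  have hm01 : ∀ t, mistake w x y t = 0 ∨ mistake w x y t = 1 := by
    intro t; unfold mistake; split <;> simp
  have hmnn : ∀ t, 0 ≤ mistake w x y t := by
    intro t; rcases hm01 t with h | h <;> rw [h] <;> norm_num
  have hmle : ∀ t, mistake w x y t ≤ 1 := by
    intro t; rcases hm01 t with h | h <;> rw [h] <;> norm_num
  have hy2 : ∀ t, (y t) ^ 2 = 1 := by
    intro t; rcases hy t with h | h <;> rw [h] <;> norm_num
  have hkey : ∀ t, mistake w x y t ≠ 0 → y t * ⟪w t, x t⟫ ≤ 0 := by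
    intro t ht
    have hs : Real.sign ⟪w t, x t⟫ ≠ y t := by
      intro h; apply ht; unfold mistake; rw [if_pos h]
    rcases hy t with h1 | h1 <;> rw [h1] at hs ⊢
    · by_contra h
      push_neg at h
      exact hs (Real.sign_of_pos (by linarith))
    · by_contra h
      push_neg at h
      have : ⟪w t, x t⟫ < 0 := by nlinarith
      exact hs (Real.sign_of_neg this)
  -- Claim A : inner product with u
  have hA : ∀ k, k ≤ n →
      ⟪u, w (k+1)⟫ = ∑ t ∈ Icc 1 k, mistake w x y t * (y t * ⟪u, x t⟫) := by
    intro k hk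
    induction k with
    | zero => simp [hw1]
    | succ k ih =>
      rw [Finset.sum_Icc_succ_top (by omega : 1 ≤ k+1),
        hupd (k+1) (by omega) hk, inner_add_right, ih (by omega),
        inner_smul_right, inner_smul_right]
  -- Claim B : norm bound
  have hB : ∀ k, k ≤ n →
      ‖w (k+1)‖ ^ 2 ≤ ∑ t ∈ Icc 1 k, mistake w x y t * ‖x t‖ ^ 2 := by
    intro k hk
    induction k with
    | zero => simp [hw1]
    | succ k ih =>
      rw [Finset.sum_Icc_succ_top (by omega : 1 ≤ k+1),
        hupd (k+1) (by omega) hk]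
      have hexp := @norm_add_sq_real (EuclideanSpace ℝ (Fin d)) _ _
        (w (k+1)) (mistake w x y (k+1) • ((y (k+1)) • (x (k+1))))
      rw [hexp]
      have h1 : ⟪w (k+1), mistake w x y (k+1) • ((y (k+1)) • (x (k+1)))⟫ ≤ 0 := by
        rw [inner_smul_right, inner_smul_right]
        rcases hm01 (k+1) with h | h
        · rw [h]; simp
        · have hk0 := hkey (k+1) (by rw [h]; norm_num)
          rw [h]; nlinarith
      have h2 : ‖mistake w x y (k+1) • ((y (k+1)) • (x (k+1)))‖ ^ 2 ≤
          mistake w x y (k+1) * ‖x (k+1)‖ ^ 2 := by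
        rw [norm_smul, norm_smul]
        rcases hm01 (k+1) with h | h <;> rw [h] <;>
          rcases hy (k+1) with h' | h' <;> rw [h'] <;> simp
      have := ih (by omega)
      linarith
  -- abbreviations
  set M : ℝ := ∑ t ∈ Icc 1 n, mistake w x y t with hM
  have hMnn : 0 ≤ M := Finset.sum_nonneg fun t _ => hmnn t
  have hD1nn : 0 ≤ D₁ := by
    rw [hD₁]; exact Finset.sum_nonneg fun t _ => le_max_right _ _
  have hqnn : 0 ≤ Real.sqrt (γ * D₁) := Real.sqrt_nonneg _
  rcases eq_or_lt_of_le hMnn with hM0 | hMpos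
  · rw [← hM0]; positivity
  -- M > 0 case: get R ≥ 0
  have hRnn : 0 ≤ R := by
    by_contra hRneg
    push_neg at hRneg
    obtain ⟨t, ht, htpos⟩ : ∃ t ∈ Icc 1 n, 0 < mistake w x y t := by
      by_contra hc
      push_neg at hc
      have : M = 0 := by
        rw [hM]
        exact Finset.sum_eq_zero fun t ht => le_antisymm (hc t ht) (hmnn t)
      linarith
    simp only [Finset.mem_Icc] at ht
    have := hR t ht.1 ht.2
    have := norm_nonneg (x t)
    linarith
  -- lower bound on inner product
  have hlower : γ * M - D₁ ≤ ⟪u, w (n+1)⟫ := by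
    rw [hA n le_rfl, hD₁, hM, Finset.mul_sum, ← Finset.sum_sub_distrib]
    apply Finset.sum_le_sum
    intro t _
    have h1 : γ - max (γ - y t * ⟪u, x t⟫) 0 ≤ y t * ⟪u, x t⟫ := by
      have := le_max_left (γ - y t * ⟪u, x t⟫) 0
      linarith
    have h2 : 0 ≤ max (γ - y t * ⟪u, x t⟫) 0 := le_max_right _ _
    nlinarith [hmnn t, hmle t]
  -- upper bound via norm
  have hcs : ⟪u, w (n+1)⟫ ≤ ‖w (n+1)‖ := by
    calc ⟪u, w (n+1)⟫ ≤ ‖u‖ * ‖w (n+1)‖ := real_inner_le_norm _ _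
    _ = ‖w (n+1)‖ := by rw [hu, one_mul]
  have hnormsq : ‖w (n+1)‖ ^ 2 ≤ M * R ^ 2 := by
    calc ‖w (n+1)‖ ^ 2 ≤ ∑ t ∈ Icc 1 n, mistake w x y t * ‖x t‖ ^ 2 :=
          hB n le_rfl
      _ ≤ ∑ t ∈ Icc 1 n, mistake w x y t * R ^ 2 := by
          apply Finset.sum_le_sum
          intro t ht
          simp only [Finset.mem_Icc] at ht
          have hx := hR t ht.1 ht.2
          exact mul_le_mul_of_nonneg_left (pow_le_pow_left₀ (norm_nonneg _) hx 2) (hmnn t)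
      _ = M * R ^ 2 := by rw [hM, ← Finset.sum_mul]
  set s : ℝ := Real.sqrt M with hs
  have hs2 : s ^ 2 = M := Real.sq_sqrt hMnn
  have hspos : 0 < s := Real.sqrt_pos.mpr hMpos
  have hWle : ‖w (n+1)‖ ≤ s * R := by
    have h1 : ‖w (n+1)‖ ^ 2 ≤ (s * R) ^ 2 := by rw [mul_pow, hs2]; linarith
    have h2 : 0 ≤ s * R := mul_nonneg hspos.le hRnn
    nlinarith [norm_nonneg (w (n+1))]
  have hmain : γ * s ^ 2 ≤ R * s + D₁ := by rw [hs2]; nlinarith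
  set q : ℝ := Real.sqrt (γ * D₁) with hq
  have hq2 : q ^ 2 = γ * D₁ := Real.sq_sqrt (by positivity)
  have hsle : s ≤ (R + q) / γ := by
    by_contra hc
    push_neg at hc
    have h1 : R + q < γ * s := by
      have := (div_lt_iff₀ hγ).mp hc
      linarith
    nlinarith [mul_pos hγ hspos, hqnn]
  calc M = s ^ 2 := hs2.symm
    _ ≤ ((R + q) / γ) ^ 2 := by
        apply pow_le_pow_left₀ hspos.le hsle
    _ = ((R + Real.sqrt (γ * D₁)) / γ) ^ 2 := by rw [hq]
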